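/- Let n and d be integers with d > n ≥ 3, and let f ∈ ℂ[x₁,…,xₙ] be a homogeneous polynomial of degree d whose Milnor algebra ℂ[x₁,…,xₙ]/(∂f) is finite-dimensional as a ℂ-vector space. Then 2d−n+1 ≤ n(d−2), and there exist a monomial of degree 2d−n and a monomial of degree 2d−n+1 whose residue classes in the Milnor algebra ℂ[x₁,…,xₙ]/(∂f) are nonzero. -/

import Mathlib

/-!
Count dimensions in degree `K = 2d - n + 1`. The partials `∂ᵢf` are forms of degree `d - 1`,
so the degree-`K` part of `J = (∂f)` is `S_{K-d+1} · W`, where `S_D` is the space of forms of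
degree `D` and `W = span (∂ᵢf)`. If every monomial of degree `K` lay in `J`, then
`C(2d, n-1) = dim S_K ≤ dim (S_{d-n+2} · W) ≤ n · C(d+1, n-1)`, which is false for `n ≥ 4`.
For `n = 3` this crude count fails when `d ∈ {4, 5}`. But then `K - d + 1 = d - 1`, so
`W ⊆ S_{d-1}`, and commutativity of the products `∂ᵢf · ∂ⱼf` (the Koszul relations) gives
`dim (S_{d-1} · W) ≤ 3 dim S_{d-1} - 3 < dim S_{2d-2}`. A monomial of degree `K` outside `J`
has a divisor of degree `K - 1`, which is outside `J` as well.
-/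

section FinrankMul

open Module Submodule
open scoped Pointwise

variable {k A : Type*} [Field k] [CommRing A] [Algebra k A]

instance Submodule.finiteDimensional_mul (M N : Submodule k A) [FiniteDimensional k M]
    [FiniteDimensional k N] : FiniteDimensional k ↥(M * N) :=
  Module.Finite.iff_fg.mpr ((Module.Finite.iff_fg.mp ‹_›).mul (Module.Finite.iff_fg.mp ‹_›))

theorem Submodule.span_range_coe_finBasis (M : Submodule k A) [FiniteDimensional k M] :
    span k (Set.range fun i => (finBasis k M i : A)) = M := by
  rw [Set.range_comp' Subtype.val, show Subtype.val = ⇑M.subtype from rfl, ← map_span,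
    (finBasis k M).span_eq, Submodule.map_top, range_subtype]

theorem Submodule.finrank_span_range_mul_span_range_le {ι κ : Type*} [Fintype ι] [Fintype κ]
    (b : ι → A) (c : κ → A) :
    finrank k ↥(span k (Set.range b) * span k (Set.range c)) ≤
      Fintype.card ι * Fintype.card κ := by
  have hprod : Set.range b * Set.range c = Set.range fun p : ι × κ => b p.1 * c p.2 := by
    ext x
    simp [Set.mem_mul]
  rw [span_mul_span, hprod, ← Fintype.card_prod]
  exact finrank_range_le_card _

theorem Submodule.finrank_span_range_mul_self_le {ι : Type*} [Fintype ι] (b : ι → A) :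
    finrank k ↥(span k (Set.range b) * span k (Set.range b)) ≤
      (Fintype.card ι + 1).choose 2 := by
  have hprod : Set.range b * Set.range b =
      Set.range (Sym2.lift ⟨fun i j => b i * b j, fun _ _ => mul_comm _ _⟩) := by
    ext x
    simp only [Set.mem_mul, Set.mem_range]
    constructor
    · rintro ⟨_, ⟨i, rfl⟩, _, ⟨j, rfl⟩, rfl⟩
      exact ⟨s(i, j), rfl⟩
    · rintro ⟨z, rfl⟩
      induction z using Sym2.ind with
      | _ i j => exact ⟨_, ⟨i, rfl⟩, _, ⟨j, rfl⟩, rfl⟩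
  rw [span_mul_span, hprod, ← Sym2.card]
  exact finrank_range_le_card _

theorem Submodule.finrank_mul_le (M N : Submodule k A) [FiniteDimensional k M]
    [FiniteDimensional k N] : finrank k ↥(M * N) ≤ finrank k M * finrank k N := by
  have h := finrank_span_range_mul_span_range_le (k := k) (fun i => (finBasis k M i : A))
    (fun i => (finBasis k N i : A))
  rwa [span_range_coe_finBasis, span_range_coe_finBasis, Fintype.card_fin,
    Fintype.card_fin] at h

theorem Submodule.finrank_mul_self_le (W : Submodule k A) [FiniteDimensional k W] :
    finrank k ↥(W * W) ≤ (finrank k W + 1).choose 2 := by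
  have h := finrank_span_range_mul_self_le (k := k) (fun i => (finBasis k W i : A))
  rwa [span_range_coe_finBasis, Fintype.card_fin] at h

theorem Submodule.finrank_mul_le_of_le {V W : Submodule k A} [FiniteDimensional k V]
    (hWV : W ≤ V) :
    finrank k ↥(V * W) ≤
      (finrank k W + 1).choose 2 + (finrank k V - finrank k W) * finrank k W := by
  have : FiniteDimensional k W := Submodule.finiteDimensional_of_le hWV
  obtain ⟨C', hC'⟩ := W.exists_isCompl
  set C := C' ⊓ V
  have : FiniteDimensional k C := Submodule.finiteDimensional_of_le inf_le_right
  have hWC : W ⊔ C = V := by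
    rw [← sup_inf_assoc_of_le C' hWV, hC'.sup_eq_top, top_inf_eq]
  have hC : finrank k C = finrank k V - finrank k W := by
    have h := finrank_sup_add_finrank_inf_eq W C
    rw [hWC, disjoint_iff.mp (hC'.disjoint.mono_right inf_le_left), finrank_bot] at h
    omega
  calc finrank k ↥(V * W) = finrank k ↥(W * W ⊔ C * W) := by rw [← hWC, sup_mul]
    _ ≤ finrank k ↥(W * W) + finrank k ↥(C * W) := finrank_add_le_finrank_add_finrank _ _
    _ ≤ _ := by
      rw [← hC]
      exact add_le_add (finrank_mul_self_le W) (finrank_mul_le C W)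

end FinrankMul

namespace MvPolynomial

open Module Submodule

variable {σ R : Type*} [CommSemiring R]

instance [Finite σ] (D : ℕ) : Module.Finite R (homogeneousSubmodule σ R D) :=
  Module.Finite.iff_fg.mpr (homogeneousSubmodule_fg σ R D)

theorem finrank_homogeneousSubmodule {k : Type*} [Field k] [Fintype σ] (D : ℕ) :
    finrank k (homogeneousSubmodule σ k D) = (Fintype.card σ + D - 1).choose D := by
  classical
  have hset : {ν : σ →₀ ℕ | ν.degree = D} =
      ((Finset.univ : Finset σ).finsuppAntidiag D : Set (σ →₀ ℕ)) := by
    ext ν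
    simp [Finsupp.degree_eq_sum]
  rw [homogeneousSubmodule_eq_finsupp_supported,
    (AddMonoidAlgebra.supportedEquivFinsupp _).finrank_eq, hset, finrank_finsupp_self]
  simp [Finset.card_finsuppAntidiag_nat_eq_choose]

theorem homogeneousComponent_mul_of_isHomogeneous {h : MvPolynomial σ R} {e K : ℕ}
    (hh : h.IsHomogeneous e) (heK : e ≤ K) (q : MvPolynomial σ R) :
    homogeneousComponent K (q * h) = homogeneousComponent (K - e) q * h := by
  induction q using MvPolynomial.induction_on' with
  | monomial μ a =>
    have hμ : (monomial μ a).IsHomogeneous μ.degree := isHomogeneous_monomial a rfl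
    rw [homogeneousComponent_of_mem hμ, homogeneousComponent_of_mem (hμ.mul hh)]
    by_cases hc : K - e = μ.degree
    · rw [if_pos hc, if_pos (by omega)]
    · rw [if_neg hc, if_neg (by omega), zero_mul]
  | add p q ihp ihq => rw [add_mul, map_add, map_add, ihp, ihq, add_mul]

theorem homogeneousComponent_mem_mul_span_of_mem_span {ι : Type*} [Fintype ι]
    {g : ι → MvPolynomial σ R} {e K : ℕ} (hg : ∀ i, (g i).IsHomogeneous e) (heK : e ≤ K)
    {p : MvPolynomial σ R} (hp : p ∈ Ideal.span (Set.range g)) :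
    homogeneousComponent K p ∈ homogeneousSubmodule σ R (K - e) * span R (Set.range g) := by
  obtain ⟨c, rfl⟩ := Ideal.mem_span_range_iff_exists_fun.mp hp
  rw [map_sum]
  refine Submodule.sum_mem _ fun i _ => ?_
  rw [homogeneousComponent_mul_of_isHomogeneous (hg i) heK]
  exact mul_mem_mul (homogeneousComponent_mem _ _) (subset_span ⟨i, rfl⟩)

theorem homogeneousSubmodule_le_of_monomial_mem {I : Ideal (MvPolynomial σ R)} {D : ℕ}
    (hI : ∀ ν : σ →₀ ℕ, ν.degree = D → monomial ν 1 ∈ I) :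
    homogeneousSubmodule σ R D ≤ I.restrictScalars R := by
  intro p hp
  rw [← p.support_sum_monomial_coeff]
  refine Ideal.sum_mem _ fun ν hν => ?_
  rw [← mul_one (p.coeff ν), ← smul_eq_mul, ← smul_monomial]
  exact Submodule.smul_of_tower_mem _ _ (hI ν (hp.degree_eq_sum_deg_support hν).symm)

theorem homogeneousSubmodule_le_mul_span {ι : Type*} [Fintype ι]
    {g : ι → MvPolynomial σ R} {e K : ℕ} (hg : ∀ i, (g i).IsHomogeneous e) (heK : e ≤ K)
    (hK : ∀ ν : σ →₀ ℕ, ν.degree = K → monomial ν 1 ∈ Ideal.span (Set.range g)) :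
    homogeneousSubmodule σ R K ≤ homogeneousSubmodule σ R (K - e) * span R (Set.range g) := by
  intro p hp
  rw [← homogeneousComponent_eq_self hp]
  exact homogeneousComponent_mem_mul_span_of_mem_span hg heK
    (homogeneousSubmodule_le_of_monomial_mem hK hp)

theorem monomial_one_notMem_of_le {I : Ideal (MvPolynomial σ R)} {μ ν : σ →₀ ℕ} (hμν : μ ≤ ν)
    (hν : monomial ν (1 : R) ∉ I) : monomial μ (1 : R) ∉ I := fun hμ =>
  hν <| by
    rw [← tsub_add_cancel_of_le hμν, ← mul_one (1 : R), ← monomial_mul]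
    exact I.mul_mem_left _ hμ

end MvPolynomial

theorem Nat.four_mul_add_one_choose_three_lt {d : ℕ} (hd : 3 ≤ d) :
    4 * (d + 1).choose 3 < (2 * d).choose 3 := by
  have h6 : ∀ m, 6 * m.choose 3 = m * (m - 1) * (m - 2) := fun m => by
    rw [show 6 = Nat.factorial 3 from rfl, ← Nat.descFactorial_eq_factorial_mul_choose]
    simp only [Nat.descFactorial_succ, tsub_zero, Nat.descFactorial_zero, mul_one]
    ring
  obtain ⟨c, rfl⟩ : ∃ c, d = c + 3 := ⟨d - 3, by omega⟩
  have h1 := h6 (c + 3 + 1)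
  have h2 := h6 (2 * (c + 3))
  simp only [show 2 * (c + 3) - 1 = 2 * c + 5 by omega, show 2 * (c + 3) - 2 = 2 * c + 4 by omega,
    Nat.add_sub_cancel, show c + 3 + 1 - 2 = c + 2 by omega] at h1 h2
  nlinarith

theorem Nat.succ_mul_choose_lt_choose_two_mul {m d : ℕ} (hd : 3 ≤ d) (hm : 3 ≤ m)
    (hmd : m ≤ 2 * d) : (m + 1) * (d + 1).choose m < (2 * d).choose m := by
  induction m, hm using Nat.le_induction with
  | base => exact Nat.four_mul_add_one_choose_three_lt hd
  | succ m hm ih =>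
    have ih := ih (by omega)
    have hfactor : (m + 2) * (d + 1 - m) ≤ (m + 1) * (2 * d - m) := by
      rcases le_or_gt m (d + 1) with h | h
      · obtain ⟨u, hu⟩ : ∃ u, d + 1 = m + u := ⟨d + 1 - m, by omega⟩
        rw [show d + 1 - m = u by omega, show 2 * d - m = m + 2 * u - 2 by omega]
        zify [show 2 ≤ m + 2 * u by omega]
        nlinarith
      · rw [show d + 1 - m = 0 by omega, mul_zero]
        exact Nat.zero_le _
    refine Nat.lt_of_mul_lt_mul_right (a := m + 1) ?_
    calc (m + 1 + 1) * (d + 1).choose (m + 1) * (m + 1)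
        = (m + 2) * (d + 1 - m) * (d + 1).choose m := by
          rw [mul_assoc, Nat.choose_succ_right_eq]; ring
      _ ≤ (m + 1) * (2 * d - m) * (d + 1).choose m := Nat.mul_le_mul_right _ hfactor
      _ = (m + 1) * (d + 1).choose m * (2 * d - m) := by ring
      _ < (2 * d).choose m * (2 * d - m) := Nat.mul_lt_mul_of_pos_right ih (by omega)
      _ = (2 * d).choose (m + 1) * (m + 1) := (Nat.choose_succ_right_eq _ _).symm

theorem Nat.add_one_choose_two_add_sub_mul_lt {d w : ℕ} (hd : 4 ≤ d) (hw : w ≤ 3) :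
    (w + 1).choose 2 + ((d + 1).choose 2 - w) * w < (2 * d).choose 2 := by
  have h1 : 2 * (d + 1).choose 2 = (d + 1) * d := by
    rw [Nat.choose_two_right, Nat.mul_div_cancel' (Nat.even_mul_pred_self _).two_dvd,
      Nat.add_sub_cancel]
  have h2 : 2 * (2 * d).choose 2 = 2 * d * (2 * d - 1) := by
    rw [Nat.choose_two_right, Nat.mul_div_cancel' (Nat.even_mul_pred_self _).two_dvd]
  have h3 : 3 ≤ (d + 1).choose 2 := by nlinarith
  have h4 : 3 * (d + 1).choose 2 < (2 * d).choose 2 + 3 := by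
    zify [show 1 ≤ 2 * d by omega] at h1 h2 ⊢
    nlinarith
  generalize (d + 1).choose 2 = v at h3 h4 ⊢
  generalize (2 * d).choose 2 = N at h4 ⊢
  interval_cases w <;> simp only [Nat.choose, Nat.reduceAdd] <;> omega

namespace MvPolynomial

open Module Submodule

variable {k : Type*} [Field k]

theorem finrank_homogeneousSubmodule_mul_span_lt {n d : ℕ} (hn : 3 ≤ n) (hd : n < d)
    {g : Fin n → MvPolynomial (Fin n) k} (hg : ∀ i, (g i).IsHomogeneous (d - 1)) :
    finrank k ↥(homogeneousSubmodule (Fin n) k (2 * d - n + 1 - (d - 1)) *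
        span k (Set.range g)) <
      finrank k (homogeneousSubmodule (Fin n) k (2 * d - n + 1)) := by
  have : FiniteDimensional k (span k (Set.range g)) :=
    FiniteDimensional.span_of_finite k (Set.finite_range g)
  have hW : finrank k (span k (Set.range g)) ≤ n :=
    (finrank_range_le_card g).trans_eq (Fintype.card_fin n)
  have hdim (D : ℕ) :
      finrank k (homogeneousSubmodule (Fin n) k D) = (n + D - 1).choose (n - 1) := by
    rw [finrank_homogeneousSubmodule, Fintype.card_fin, Nat.choose_symm_of_eq_add]
    omega
  rw [hdim, show n + (2 * d - n + 1) - 1 = 2 * d by omega]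
  rcases eq_or_lt_of_le hn with rfl | hn4
  · have hWS : span k (Set.range g) ≤ homogeneousSubmodule (Fin 3) k (d - 1) :=
      span_le.mpr (Set.range_subset_iff.mpr hg)
    rw [show 2 * d - 3 + 1 - (d - 1) = d - 1 by omega]
    calc _ ≤ _ := finrank_mul_le_of_le hWS
      _ < (2 * d).choose (3 - 1) := by
        rw [hdim, show 3 + (d - 1) - 1 = d + 1 by omega]
        exact Nat.add_one_choose_two_add_sub_mul_lt (by omega) hW
  · calc _ ≤ _ := finrank_mul_le _ _
      _ ≤ (d + 1).choose (n - 1) * n := by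
        rw [hdim, show n + (2 * d - n + 1 - (d - 1)) - 1 = d + 1 by omega]
        exact Nat.mul_le_mul_left _ hW
      _ < (2 * d).choose (n - 1) := by
        have h := Nat.succ_mul_choose_lt_choose_two_mul (m := n - 1) (d := d) (by omega)
          (by omega) (by omega)
        rwa [Nat.sub_add_cancel (by omega : 1 ≤ n), mul_comm] at h

theorem exists_monomial_notMem_span_of_isHomogeneous {n d : ℕ} (hn : 3 ≤ n) (hd : n < d)
    {g : Fin n → MvPolynomial (Fin n) k} (hg : ∀ i, (g i).IsHomogeneous (d - 1)) :
    ∃ ν : Fin n →₀ ℕ, ν.degree = 2 * d - n + 1 ∧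
      monomial ν (1 : k) ∉ Ideal.span (Set.range g) := by
  by_contra! h
  have : FiniteDimensional k (span k (Set.range g)) :=
    FiniteDimensional.span_of_finite k (Set.finite_range g)
  have hle := homogeneousSubmodule_le_mul_span hg (by omega) h
  exact (finrank_homogeneousSubmodule_mul_span_lt hn hd hg).not_ge (finrank_mono hle)

end MvPolynomial

theorem nonzero_monomials_of_degree_two_d_sub_n_general
    (n d : ℕ) (hn : 3 ≤ n) (hd : n < d)
    (f : MvPolynomial (Fin n) ℂ) (hf : f.IsHomogeneous d)
    (J : Ideal (MvPolynomial (Fin n) ℂ))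
    (hJ : J = Ideal.span (Set.range fun i => MvPolynomial.pderiv i f)) :
    2 * d - n + 1 ≤ n * (d - 2) ∧
    (∃ ν : Fin n →₀ ℕ, (∑ i, ν i) = 2 * d - n ∧
      Ideal.Quotient.mk J (MvPolynomial.monomial ν (1 : ℂ)) ≠ 0) ∧
    (∃ ν : Fin n →₀ ℕ, (∑ i, ν i) = 2 * d - n + 1 ∧
      Ideal.Quotient.mk J (MvPolynomial.monomial ν (1 : ℂ)) ≠ 0) := by
  obtain ⟨ν, hν, hνJ⟩ := MvPolynomial.exists_monomial_notMem_span_of_isHomogeneous hn hd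
    fun i => hf.pderiv (i := i)
  rw [← hJ] at hνJ
  obtain ⟨μ, hμν, hμ⟩ := ν.exists_le_degree_eq (2 * d - n) (by omega)
  simp only [ne_eq, Ideal.Quotient.eq_zero_iff_mem, ← Finsupp.degree_eq_sum]
  refine ⟨?_, ⟨μ, hμ, MvPolynomial.monomial_one_notMem_of_le hμν hνJ⟩, ⟨ν, hν, hνJ⟩⟩
  calc 2 * d - n + 1 ≤ 3 * (d - 2) := by omega
    _ ≤ n * (d - 2) := Nat.mul_le_mul_right _ hn

/-- For a homogeneous polynomial `f` of degree `d > n ≥ 3` over `ℂ` with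
finite-dimensional Milnor algebra, one has `2d - n + 1 ≤ n (d - 2)`, and there are monomials
of degrees `2d - n` and `2d - n + 1` with nonzero residue classes in the Milnor algebra. -/
theorem nonzero_monomials_of_degree_two_d_sub_n
    (n d : ℕ) (hn : 3 ≤ n) (hd : n < d)
    (f : MvPolynomial (Fin n) ℂ) (hf : f.IsHomogeneous d)
    (J : Ideal (MvPolynomial (Fin n) ℂ))
    (hJ : J = Ideal.span (Set.range fun i => MvPolynomial.pderiv i f))
    (hfin : FiniteDimensional ℂ (MvPolynomial (Fin n) ℂ ⧸ J)) :
    2 * d - n + 1 ≤ n * (d - 2) ∧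
    (∃ ν : Fin n →₀ ℕ, (∑ i, ν i) = 2 * d - n ∧
      Ideal.Quotient.mk J (MvPolynomial.monomial ν (1 : ℂ)) ≠ 0) ∧
    (∃ ν : Fin n →₀ ℕ, (∑ i, ν i) = 2 * d - n + 1 ∧
      Ideal.Quotient.mk J (MvPolynomial.monomial ν (1 : ℂ)) ≠ 0) :=
  nonzero_monomials_of_degree_two_d_sub_n_general n d hn hd f hf J hJ
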